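/- arXiv:2107.03980 — 8 statements merged into one kernel-verified Lean document; each statement's English description precedes it below -/
import Mathlib

section
/- Let Y be a compact Hausdorff topological space and let (μ_i)_{i∈I} be a family of Radon probability measures on Y. Then the following are equivalent: (a) for every y ∈ Y the Dirac measure δ_y lies in the weak-* closure of the set {μ_i : i ∈ I} inside the space P(Y) of Radon probability measures on Y; (b) for every continuous function f : Y → ℝ one has ‖f‖_∞ = sup_{i∈I} |∫_Y f dμ_i|, i.e. the linear map from C(Y) to ℓ∞(I) sending f to the bounded family (∫_Y f dμ_i)_{i∈I} is isometric. -/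
/-!
(a) ⇒ (b): every `|∫ f dμ i|` is at most `‖f‖`, and `ν ↦ |∫ f dν|` is weak-* continuous, so the
supremum of its values at the `μ i` also bounds its value `|f y|` at each `δ_y` in the closure.

(b) ⇒ (a): isometry applied to `‖G‖ + G y + ε - G`, whose norm `‖G‖ + ε` is attained at `y`, gives
`inf_i ∫ G dμ i ≤ G y` for every `G`. For `G = ∑_{f ∈ F} (f - f y)²` with `F` finite this makes
`(∫ f dμ i - f y)² ≤ ∫ G dμ i` small for all `f ∈ F` at once (Jensen), so indexing by pairs
(finite set, tolerance) yields a net in `{μ i}` converging weakly to `δ_y`.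
-/

open MeasureTheory Filter Topology BoundedContinuousFunction

theorem sq_integral_le_integral_sq {Ω : Type*} [MeasurableSpace Ω] {μ : Measure Ω}
    [IsProbabilityMeasure μ] {X : Ω → ℝ} (hX : MemLp X 2 μ) :
    (∫ ω, X ω ∂μ) ^ 2 ≤ ∫ ω, X ω ^ 2 ∂μ := by
  have := ProbabilityTheory.variance_nonneg X μ
  rw [ProbabilityTheory.variance_eq_sub hX] at this
  simpa [sub_nonneg] using this

noncomputable def sumSqDev {Y : Type*} [TopologicalSpace Y] (F : Finset (Y →ᵇ ℝ)) (y : Y) :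
    Y →ᵇ ℝ :=
  ∑ f ∈ F, (f - const Y (f y)) ^ 2

theorem sumSqDev_apply {Y : Type*} [TopologicalSpace Y] (F : Finset (Y →ᵇ ℝ)) (y x : Y) :
    sumSqDev F y x = ∑ f ∈ F, (f x - f y) ^ 2 := by
  simp [sumSqDev]

section OpensMeasurable

variable {Y : Type*} [TopologicalSpace Y] [MeasurableSpace Y] [OpensMeasurableSpace Y]

theorem sq_integral_sub_le_integral_sq_sub (ν : Measure Y) [IsProbabilityMeasure ν]
    (f : Y →ᵇ ℝ) (c : ℝ) : (∫ x, f x ∂ν - c) ^ 2 ≤ ∫ x, (f x - c) ^ 2 ∂ν := by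
  have hX : MemLp (fun x => f x - c) 2 ν :=
    .of_bound (f - const Y c).continuous.aestronglyMeasurable _
      (.of_forall (f - const Y c).norm_coe_le_norm)
  calc (∫ x, f x ∂ν - c) ^ 2 = (∫ x, (f x - c) ∂ν) ^ 2 := by
        rw [integral_sub (f.integrable ν) (integrable_const c), integral_const, probReal_univ,
          one_smul]
    _ ≤ ∫ x, (f x - c) ^ 2 ∂ν := sq_integral_le_integral_sq hX

theorem sq_integral_sub_le_integral_sumSqDev (ν : Measure Y) [IsProbabilityMeasure ν]
    {F : Finset (Y →ᵇ ℝ)} {f : Y →ᵇ ℝ} (hf : f ∈ F) (y : Y) :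
    (∫ x, f x ∂ν - f y) ^ 2 ≤ ∫ x, sumSqDev F y x ∂ν := by
  refine (sq_integral_sub_le_integral_sq_sub ν f (f y)).trans (integral_mono ?_ ?_ fun x => ?_)
  · exact ((f - const Y (f y)) ^ 2).integrable ν
  · exact (sumSqDev F y).integrable ν
  · rw [sumSqDev_apply]
    exact Finset.single_le_sum (f := fun g : Y →ᵇ ℝ => (g x - g y) ^ 2)
      (fun g _ => sq_nonneg _) hf

theorem abs_integral_le_iSup_of_mem_closure {I : Type*} {μ : I → ProbabilityMeasure Y}
    {ν : ProbabilityMeasure Y} (hν : ν ∈ closure (Set.range μ)) (f : Y →ᵇ ℝ) :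
    |∫ x, f x ∂(ν : Measure Y)| ≤ ⨆ i, |∫ x, f x ∂(μ i : Measure Y)| := by
  have hbdd : BddAbove (Set.range fun i => |∫ x, f x ∂(μ i : Measure Y)|) :=
    ⟨‖f‖, by rintro _ ⟨i, rfl⟩; exact f.norm_integral_le_norm _⟩
  have hclosed : IsClosed {ν : ProbabilityMeasure Y |
      |∫ x, f x ∂(ν : Measure Y)| ≤ ⨆ i, |∫ x, f x ∂(μ i : Measure Y)|} :=
    isClosed_le (continuous_abs.comp
      (ProbabilityMeasure.continuous_integral_boundedContinuousFunction f)) continuous_const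
  refine closure_minimal ?_ hclosed hν
  rintro _ ⟨i, rfl⟩
  exact le_ciSup hbdd i

theorem integral_diracProba (f : Y →ᵇ ℝ) (y : Y) :
    ∫ x, f x ∂(diracProba y : Measure Y) = f y :=
  integral_dirac' _ _ f.continuous.stronglyMeasurable

theorem diracProba_mem_closure_range_of_forall_exists_integral_lt {I : Type*}
    {μ : I → ProbabilityMeasure Y} {y : Y}
    (h : ∀ (G : Y →ᵇ ℝ) (ε : ℝ), 0 < ε → ∃ i, ∫ x, G x ∂(μ i : Measure Y) < G y + ε) :
    diracProba y ∈ closure (Set.range μ) := by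
  classical
  choose i hi using fun (p : Finset (Y →ᵇ ℝ) × ℕ) =>
    h (sumSqDev p.1 y) (1 / (p.2 + 1)) Nat.one_div_pos_of_nat
  have hlim : Tendsto (μ ∘ i) atTop (𝓝 (diracProba y)) := by
    rw [ProbabilityMeasure.tendsto_iff_forall_integral_tendsto]
    intro f
    rw [integral_diracProba]
    refine Metric.tendsto_atTop.mpr fun ε hε => ?_
    obtain ⟨n, hn⟩ := exists_nat_one_div_lt (pow_pos hε 2)
    refine ⟨({f}, n), fun p hp => ?_⟩
    have hfp : f ∈ p.1 := Finset.singleton_subset_iff.mp hp.1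
    have hsq : dist (∫ x, f x ∂(μ (i p) : Measure Y)) (f y) ^ 2 < ε ^ 2 := calc
      dist (∫ x, f x ∂(μ (i p) : Measure Y)) (f y) ^ 2
          ≤ ∫ x, sumSqDev p.1 y x ∂(μ (i p) : Measure Y) := by
        rw [Real.dist_eq, sq_abs]
        exact sq_integral_sub_le_integral_sumSqDev _ hfp y
      _ < 1 / (p.2 + 1) := by simpa [sumSqDev_apply] using hi p
      _ ≤ 1 / (n + 1) := by gcongr; exact_mod_cast hp.2
      _ < ε ^ 2 := hn
    exact (pow_lt_pow_iff_left₀ dist_nonneg hε.le two_ne_zero).mp hsq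
  exact mem_closure_of_tendsto hlim (.of_forall fun p => ⟨_, rfl⟩)

theorem exists_integral_lt_add_of_norm_eq_iSup [CompactSpace Y] {I : Type*}
    {μ : I → ProbabilityMeasure Y}
    (h : ∀ f : C(Y, ℝ), ‖f‖ = ⨆ i, |∫ x, f x ∂(μ i : Measure Y)|)
    (G : Y →ᵇ ℝ) (y : Y) {ε : ℝ} (hε : 0 < ε) :
    ∃ i, ∫ x, G x ∂(μ i : Measure Y) < G y + ε := by
  by_contra! hG
  set c := ‖G‖ + G y + ε
  set φ : C(Y, ℝ) := .const Y c - G.toContinuousMap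
  have hφ : ∀ x, φ x = c - G x := fun x => rfl
  have hGy : -‖G‖ ≤ G y := neg_le_of_abs_le (G.norm_coe_le_norm y)
  have hint : ∀ i, |∫ x, φ x ∂(μ i : Measure Y)| ≤ ‖G‖ := fun i => by
    have hGi : ∫ x, G x ∂(μ i : Measure Y) ≤ ‖G‖ :=
      (le_abs_self _).trans (G.norm_integral_le_norm _)
    simp only [hφ]
    rw [integral_sub (integrable_const c) (G.integrable _), integral_const, probReal_univ,
      one_smul, abs_le]
    constructor <;> linarith [hG i]
  have := calc
    ‖G‖ + ε = |φ y| := by rw [hφ, abs_of_pos] <;> linarith [norm_nonneg G]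
    _ ≤ ‖φ‖ := φ.norm_coe_le_norm y
    _ = ⨆ i, |∫ x, φ x ∂(μ i : Measure Y)| := h φ
    _ ≤ ‖G‖ := Real.iSup_le hint (norm_nonneg G)
  linarith

end OpensMeasurable

theorem dirac_mem_closure_iff_isometric_general
    {Y : Type*} [TopologicalSpace Y] [CompactSpace Y]
    [MeasurableSpace Y] [BorelSpace Y]
    {I : Type*} (μ : I → ProbabilityMeasure Y) :
    (∀ y : Y,
      (⟨Measure.dirac y, inferInstance⟩ : ProbabilityMeasure Y) ∈ closure (Set.range μ)) ↔
    (∀ f : C(Y, ℝ), ‖f‖ = ⨆ i : I, |∫ y, f y ∂(μ i : Measure Y)|) := by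
  refine ⟨fun hdirac f => le_antisymm ?_ ?_, fun hnorm y =>
    diracProba_mem_closure_range_of_forall_exists_integral_lt fun G ε hε =>
      exists_integral_lt_add_of_norm_eq_iSup hnorm G y hε⟩
  · refine (f.norm_le (Real.iSup_nonneg fun i => abs_nonneg _)).mpr fun y => ?_
    have := abs_integral_le_iSup_of_mem_closure (ν := diracProba y) (hdirac y) (mkOfCompact f)
    rwa [integral_diracProba] at this
  · refine Real.iSup_le (fun i => ?_) (norm_nonneg f)
    simpa using (mkOfCompact f).norm_integral_le_norm (μ i : Measure Y)

/-- For a compact Hausdorff space `Y` and a family `(μ i)` of (Radon = Borel)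
probability measures on `Y`, every Dirac measure lies in the weak-* closure of the family
if and only if the map `C(Y, ℝ) → ℓ∞(I)`, `f ↦ (∫ f dμ i)ᵢ`, is isometric. -/
theorem dirac_mem_closure_iff_isometric
    {Y : Type*} [TopologicalSpace Y] [CompactSpace Y] [T2Space Y]
    [MeasurableSpace Y] [BorelSpace Y]
    {I : Type*} (μ : I → ProbabilityMeasure Y) :
    (∀ y : Y,
      (⟨Measure.dirac y, inferInstance⟩ : ProbabilityMeasure Y) ∈ closure (Set.range μ)) ↔
    (∀ f : C(Y, ℝ), ‖f‖ = ⨆ i : I, |∫ y, f y ∂(μ i : Measure Y)|) :=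
  dirac_mem_closure_iff_isometric_general μ
end

section
/- Let G be a group, let Z be a G-boundary, and let Y be a nonempty compact Hausdorff G-space on which the action of G is minimal. Then there is at most one continuous G-equivariant map from Y to Z: any two continuous G-equivariant maps ψ₁, ψ₂ : Y → Z are equal. -/
open MeasureTheory

/-- The Dirac probability measure at a point. -/
noncomputable def diracProb {X : Type*} [MeasurableSpace X] (x : X) :
    ProbabilityMeasure X :=
  ⟨Measure.dirac x, inferInstance⟩

/-- The pushforward action of a group element on probability measures:
`(g • μ)(E) = μ (g⁻¹ • E)`. -/
noncomputable def pushforwardProb {G X : Type*} [Group G] [TopologicalSpace X]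
    [MeasurableSpace X] [BorelSpace X] [MulAction G X] [ContinuousConstSMul G X]
    (g : G) (μ : ProbabilityMeasure X) : ProbabilityMeasure X :=
  μ.map (f := fun x => g • x) ((continuous_const_smul g).measurable.aemeasurable)

/-- The action of `G` on `X` is minimal if every orbit is dense. -/
def IsMinimalAction (G X : Type*) [Group G] [TopologicalSpace X] [MulAction G X] : Prop :=
  ∀ x : X, Dense (MulAction.orbit G x)

/-- The action of `G` on `X` is strongly proximal if the weak-* closure of the orbit of every
probability measure on `X` contains a Dirac measure. -/
def IsStronglyProximal (G X : Type*) [Group G] [TopologicalSpace X] [MeasurableSpace X]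
    [BorelSpace X] [MulAction G X] [ContinuousConstSMul G X] : Prop :=
  ∀ μ : ProbabilityMeasure X, ∃ x : X,
    diracProb x ∈ closure {ν | ∃ g : G, ν = pushforwardProb g μ}

/-!
The map `y ↦ ½ δ_{ψ₁ y} + ½ δ_{ψ₂ y}` into the probability measures on `Z` is continuous and
equivariant. Strong proximality puts a Dirac measure `δ_z` in the closure of one of its orbits, so
by compactness of `Y` some `½ δ_{ψ₁ y} + ½ δ_{ψ₂ y}` has the same integrals as `δ_z`.
Urysohn functions then force `ψ₁ y = z = ψ₂ y`, and the closed set where `ψ₁ = ψ₂` contains the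
dense orbit of `y`.
-/

open MeasureTheory Set
open scoped NNReal ENNReal BoundedContinuousFunction

section DiracMix

variable {Z : Type*} [MeasurableSpace Z]

noncomputable def diracMix (a b : Z) : ProbabilityMeasure Z :=
  ⟨(2 : ℝ≥0∞)⁻¹ • Measure.dirac a + (2 : ℝ≥0∞)⁻¹ • Measure.dirac b,
    ⟨by simp [ENNReal.inv_two_add_inv_two]⟩⟩

lemma lintegral_diracMix (a b : Z) {f : Z → ℝ≥0∞} (hf : Measurable f) :
    ∫⁻ x, f x ∂(diracMix a b : Measure Z) = 2⁻¹ * f a + 2⁻¹ * f b := by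
  simp only [diracMix, ProbabilityMeasure.coe_mk, lintegral_add_measure, lintegral_smul_measure,
    lintegral_dirac' _ hf, smul_eq_mul]

variable [TopologicalSpace Z] [BorelSpace Z]

lemma pushforwardProb_diracMix {G : Type*} [Group G] [MulAction G Z] [ContinuousConstSMul G Z]
    (g : G) (a b : Z) : pushforwardProb g (diracMix a b) = diracMix (g • a) (g • b) := by
  have hg : Measurable fun x : Z => g • x := (continuous_const_smul g).measurable
  apply ProbabilityMeasure.toMeasure_injective
  rw [pushforwardProb, ProbabilityMeasure.toMeasure_map]
  simp only [diracMix, ProbabilityMeasure.coe_mk, Measure.map_add _ _ hg, Measure.map_smul,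
    Measure.map_dirac' hg]

lemma Continuous.diracMix {Y : Type*} [TopologicalSpace Y] {a b : Y → Z} (ha : Continuous a)
    (hb : Continuous b) : Continuous fun y => diracMix (a y) (b y) := by
  refine ProbabilityMeasure.continuous_iff_forall_continuous_lintegral.2 fun f => ?_
  have hf : Continuous fun x => (f x : ℝ≥0∞) := ENNReal.continuous_coe.comp f.continuous
  simp only [lintegral_diracMix _ _ hf.measurable]
  exact ((ENNReal.continuous_const_mul (by simp)).comp (hf.comp ha)).add
    ((ENNReal.continuous_const_mul (by simp)).comp (hf.comp hb))

end DiracMix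

lemma eq_of_forall_inv_two_mul_add_inv_two_mul_eq {Z : Type*} [TopologicalSpace Z] [T35Space Z]
    {a b z : Z} (h : ∀ f : Z →ᵇ ℝ≥0, 2⁻¹ * (f a : ℝ≥0∞) + 2⁻¹ * f b = f z) : a = z := by
  by_contra hne
  obtain ⟨u, hu, huz, hua⟩ :=
    CompletelyRegularSpace.completely_regular z {a} isClosed_singleton (Ne.symm hne)
  let f : Z →ᵇ ℝ≥0 := (BoundedContinuousFunction.mkOfCompact
    ⟨unitInterval.toNNReal, unitInterval.toNNReal_continuous⟩).compContinuous ⟨u, hu⟩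
  have hfa : f a = 1 := by simp [f, hua (mem_singleton a)]
  have hfz : f z = 0 := by simp [f, huz]
  simpa [hfa, hfz] using h f

lemma IsStronglyProximal.exists_lintegral_eq_apply {G Z Y : Type*} [Group G]
    [TopologicalSpace Z] [MeasurableSpace Z] [BorelSpace Z] [MulAction G Z]
    [ContinuousConstSMul G Z] [TopologicalSpace Y] [CompactSpace Y] [Nonempty Y] [SMul G Y]
    (hZ : IsStronglyProximal G Z) {F : Y → ProbabilityMeasure Z} (hF : Continuous F)
    (hFe : ∀ (g : G) (y : Y), F (g • y) = pushforwardProb g (F y)) :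
    ∃ y z, ∀ f : Z →ᵇ ℝ≥0, ∫⁻ x, f x ∂(F y : Measure Z) = f z := by
  obtain ⟨y₀⟩ := ‹Nonempty Y›
  obtain ⟨z, hz⟩ := hZ (F y₀)
  let Φ : ProbabilityMeasure Z → (Z →ᵇ ℝ≥0) → ℝ≥0∞ := fun ν f => ∫⁻ x, f x ∂(ν : Measure Z)
  have hΦ : Continuous Φ :=
    continuous_pi ProbabilityMeasure.continuous_lintegral_boundedContinuousFunction
  have horbit : {ν | ∃ g : G, ν = pushforwardProb g (F y₀)} ⊆ range F := by
    rintro _ ⟨g, rfl⟩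
    exact ⟨g • y₀, hFe g y₀⟩
  -- `ProbabilityMeasure Z` need not be Hausdorff, but the codomain of `Φ` is, so that the
  -- compact image of `Y` there is closed
  have hmem : Φ (diracProb z) ∈ range (Φ ∘ F) := by
    rw [← (isCompact_range (hΦ.comp hF)).isClosed.closure_eq, range_comp]
    exact image_closure_subset_closure_image hΦ ⟨_, closure_mono horbit hz, rfl⟩
  obtain ⟨y, hy⟩ := hmem
  refine ⟨y, z, fun f => ?_⟩
  simpa [Φ, diracProb, lintegral_dirac' _ f.continuous.measurable.coe_nnreal_ennreal] using
    congrFun hy f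

lemma IsMinimalAction.eq_of_smul_apply_eq {G Y Z : Type*} [Group G] [TopologicalSpace Y]
    [MulAction G Y] [TopologicalSpace Z] [T2Space Z] (hY : IsMinimalAction G Y)
    {ψ₁ ψ₂ : Y → Z} (h₁c : Continuous ψ₁) (h₂c : Continuous ψ₂) {y : Y}
    (hy : ∀ g : G, ψ₁ (g • y) = ψ₂ (g • y)) : ψ₁ = ψ₂ := by
  have horbit : MulAction.orbit G y ⊆ {w | ψ₁ w = ψ₂ w} := by
    rintro _ ⟨g, rfl⟩
    exact hy g
  funext w
  exact (isClosed_eq h₁c h₂c).closure_subset_iff.2 horbit (hY y w)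

theorem equivariant_map_to_boundary_unique_general
    {G Z Y : Type*} [Group G]
    [TopologicalSpace Z] [CompactSpace Z] [T2Space Z]
    [MeasurableSpace Z] [BorelSpace Z] [MulAction G Z] [ContinuousConstSMul G Z]
    [TopologicalSpace Y] [CompactSpace Y] [Nonempty Y]
    [MulAction G Y]
    (hZprox : IsStronglyProximal G Z)
    (hYmin : IsMinimalAction G Y)
    (ψ₁ ψ₂ : Y → Z) (h₁c : Continuous ψ₁) (h₁e : ∀ (g : G) (y : Y), ψ₁ (g • y) = g • ψ₁ y)
    (h₂c : Continuous ψ₂) (h₂e : ∀ (g : G) (y : Y), ψ₂ (g • y) = g • ψ₂ y) :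
    ψ₁ = ψ₂ := by
  obtain ⟨y, z, hyz⟩ := hZprox.exists_lintegral_eq_apply (h₁c.diracMix h₂c) fun g y => by
    rw [h₁e, h₂e, pushforwardProb_diracMix]
  have hmix (f : Z →ᵇ ℝ≥0) : 2⁻¹ * (f (ψ₁ y) : ℝ≥0∞) + 2⁻¹ * f (ψ₂ y) = f z := by
    rw [← hyz f, lintegral_diracMix _ _ f.continuous.measurable.coe_nnreal_ennreal]
  have h₁ : ψ₁ y = z := eq_of_forall_inv_two_mul_add_inv_two_mul_eq hmix
  have h₂ : ψ₂ y = z := eq_of_forall_inv_two_mul_add_inv_two_mul_eq fun f => by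
    rw [add_comm, hmix]
  exact hYmin.eq_of_smul_apply_eq h₁c h₂c fun g => by rw [h₁e, h₂e, h₁, h₂]

/-- If `Z` is a `G`-boundary and `Y` is a nonempty compact Hausdorff minimal
`G`-space, then any two continuous `G`-equivariant maps `Y → Z` are equal. -/
theorem equivariant_map_to_boundary_unique
    {G Z Y : Type*} [Group G]
    [TopologicalSpace Z] [CompactSpace Z] [T2Space Z] [Nonempty Z]
    [MeasurableSpace Z] [BorelSpace Z] [MulAction G Z] [ContinuousConstSMul G Z]
    [TopologicalSpace Y] [CompactSpace Y] [T2Space Y] [Nonempty Y]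
    [MulAction G Y] [ContinuousConstSMul G Y]
    (hZmin : IsMinimalAction G Z) (hZprox : IsStronglyProximal G Z)
    (hYmin : IsMinimalAction G Y)
    (ψ₁ ψ₂ : Y → Z) (h₁c : Continuous ψ₁) (h₁e : ∀ (g : G) (y : Y), ψ₁ (g • y) = g • ψ₁ y)
    (h₂c : Continuous ψ₂) (h₂e : ∀ (g : G) (y : Y), ψ₂ (g • y) = g • ψ₂ y) :
    ψ₁ = ψ₂ :=
  equivariant_map_to_boundary_unique_general hZprox hYmin ψ₁ ψ₂ h₁c h₁e h₂c h₂e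
end

section
/- Let G be a group and let (Y_j)_{j∈J} be a (possibly infinite) family of G-boundaries. Then the product ∏_{j∈J} Y_j, equipped with the product topology and the diagonal G-action, is strongly proximal: for every Radon probability measure μ on ∏_{j∈J} Y_j there exists a point y in the product such that the Dirac measure δ_y lies in the weak-* closure of the orbit {g·μ : g ∈ G}. -/
open MeasureTheory

/-!
`P(X)` is compact for compact Hausdorff `X = ∏ Y_j` (Riesz–Markov–Kakutani), and the closure `K`
of the orbit of `μ` is closed and `G`-invariant. Given a nonempty closed invariant `T ⊆ P(X)` and a
factor `Y_j`, push an orbit closure in `T` forward to `P(Y_j)`: its closure is closed and invariant,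
so, `Y_j` being a boundary, it contains Dirac measures, and compactness lifts one back to a point
of `T` whose `j`-th marginal is Dirac. By the finite intersection property some `ν ∈ K` has all its
marginals Dirac, at `x_j` say. Then `ν` gives full mass to every product neighbourhood of
`x = (x_j)`, so it integrates bounded continuous functions like `δ_x`, and `δ_x ∈ K`.

Borel measures on a non-metrizable compact space need not be determined by their integrals of
continuous functions, so `P(X)` is only R₁: "Dirac" above means inseparable from a Dirac measure.
-/

open Filter Set Topology BoundedContinuousFunction Pointwise

section WeakConvergence

variable {X : Type*} [TopologicalSpace X] [MeasurableSpace X] [OpensMeasurableSpace X]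

namespace MeasureTheory

theorem ProbabilityMeasure.specializes_of_forall_integral_eq {μ ν : ProbabilityMeasure X}
    (h : ∀ f : X →ᵇ ℝ, ∫ x, f x ∂(μ : Measure X) = ∫ x, f x ∂(ν : Measure X)) :
    μ ⤳ ν := by
  rw [specializes_iff_nhds]
  exact ProbabilityMeasure.tendsto_iff_forall_integral_tendsto.2 fun f ↦
    h f ▸ ProbabilityMeasure.tendsto_iff_forall_integral_tendsto.1 tendsto_id f

theorem _root_.Inseparable.integral_eq {μ ν : ProbabilityMeasure X} (h : Inseparable μ ν)
    (f : X →ᵇ ℝ) : ∫ x, f x ∂(μ : Measure X) = ∫ x, f x ∂(ν : Measure X) :=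
  tendsto_nhds_unique (ProbabilityMeasure.tendsto_iff_forall_integral_tendsto.1 tendsto_id f)
    (ProbabilityMeasure.tendsto_iff_forall_integral_tendsto.1 (h.nhds_eq ▸ tendsto_id) f)

theorem integral_eq_of_ae_le_nhds {μ : Measure X} [IsProbabilityMeasure μ] {x : X}
    (h : ae μ ≤ 𝓝 x) (f : X →ᵇ ℝ) : ∫ z, f z ∂μ = f x := by
  refine eq_of_forall_dist_le fun ε hε ↦ ?_
  have hclose : ∀ᵐ z ∂μ, ‖f z - f x‖ ≤ ε :=
    ((f.continuous.tendsto x).mono_left h).eventually (Metric.closedBall_mem_nhds _ hε)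
  calc dist (∫ z, f z ∂μ) (f x) = ‖∫ z, (f z - f x) ∂μ‖ := by
        rw [integral_sub (f.integrable μ) (integrable_const _), integral_const, probReal_univ,
          one_smul, dist_eq_norm]
    _ ≤ ε * μ.real univ := norm_integral_le_of_norm_le_const hclose
    _ = ε := by simp

theorem ProbabilityMeasure.specializes_diracProba_of_ae_le_nhds {μ : ProbabilityMeasure X}
    {x : X} (h : ae (μ : Measure X) ≤ 𝓝 x) : μ ⤳ diracProba x :=
  specializes_of_forall_integral_eq fun f ↦ by
    rw [integral_eq_of_ae_le_nhds h, diracProba, ProbabilityMeasure.coe_mk,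
      integral_dirac' _ _ f.continuous.stronglyMeasurable]

theorem ProbabilityMeasure.ae_le_nhds_of_inseparable_diracProba [CompletelyRegularSpace X]
    {μ : ProbabilityMeasure X} {x : X} (h : Inseparable μ (diracProba x)) :
    ae (μ : Measure X) ≤ 𝓝 x := by
  intro U hU
  obtain ⟨u, hu, hux, huU⟩ := CompletelyRegularSpace.completely_regular x (interior U)ᶜ
    isOpen_interior.isClosed_compl (by simpa using mem_interior_iff_mem_nhds.2 hU)
  let g : X →ᵇ ℝ := .mkOfBound ⟨fun z ↦ u z, by fun_prop⟩ 1 fun a b ↦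
    Real.dist_le_of_mem_Icc_01 (u a).2 (u b).2
  have hg : ∫ z, g z ∂(μ : Measure X) = 0 := by
    rw [h.integral_eq g, diracProba, ProbabilityMeasure.coe_mk,
      integral_dirac' _ _ g.continuous.stronglyMeasurable]
    simp [g, hux]
  have hg0 : g =ᵐ[(μ : Measure X)] 0 :=
    (integral_eq_zero_iff_of_nonneg (fun z ↦ (u z).2.1) (g.integrable _)).1 hg
  filter_upwards [hg0] with z hz
  by_contra hzU
  have : u z = 1 := huU fun hi ↦ hzU (interior_subset hi)
  simp [g, this] at hz

theorem ProbabilityMeasure.exists_ae_le_nhds_of_mem_closure_range_diracProba [CompactSpace X]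
    [CompletelyRegularSpace X] {μ : ProbabilityMeasure X} (h : μ ∈ closure (range diracProba)) :
    ∃ x, ae (μ : Measure X) ≤ 𝓝 x := by
  obtain ⟨_, ⟨x, rfl⟩, hx⟩ :=
    (isCompact_range continuous_diracProba).mem_closure_iff_exists_inseparable.1 h
  exact ⟨x, ae_le_nhds_of_inseparable_diracProba hx.symm⟩

theorem ae_le_nhds_pi {J : Type*} {Y : J → Type*} [∀ j, TopologicalSpace (Y j)]
    [∀ j, MeasurableSpace (Y j)] [∀ j, BorelSpace (Y j)] [MeasurableSpace (∀ j, Y j)]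
    [OpensMeasurableSpace (∀ j, Y j)] {μ : Measure (∀ j, Y j)} {x : ∀ j, Y j}
    (h : ∀ j, ae (μ.map (fun z ↦ z j)) ≤ 𝓝 (x j)) : ae μ ≤ 𝓝 x := by
  rw [nhds_pi, Filter.le_pi]
  exact fun j ↦
    (Measure.tendsto_ae_map (continuous_apply j).measurable.aemeasurable).mono_right (h j)

end MeasureTheory

end WeakConvergence

theorem IsClosed.closure_orbit_subset {G α : Type*} [Group G] [MulAction G α]
    [TopologicalSpace α] {s : Set α} (hs : IsClosed s) (hsG : ∀ g : G, g • s ⊆ s) {a : α}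
    (ha : a ∈ s) : closure (MulAction.orbit G a) ⊆ s :=
  closure_minimal (by rintro _ ⟨g, rfl⟩; exact hsG g (smul_mem_smul_set ha)) hs

section Action

variable {G X Y : Type*} [Group G]
  [TopologicalSpace X] [MeasurableSpace X] [BorelSpace X] [MulAction G X] [ContinuousConstSMul G X]
  [TopologicalSpace Y] [MeasurableSpace Y] [BorelSpace Y] [MulAction G Y] [ContinuousConstSMul G Y]

namespace MeasureTheory.ProbabilityMeasure

theorem toMeasure_pushforwardProb (g : G) (μ : ProbabilityMeasure X) :
    (pushforwardProb g μ : Measure X) = (μ : Measure X).map (g • ·) :=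
  toMeasure_map _ _

noncomputable instance : MulAction G (ProbabilityMeasure X) where
  smul := pushforwardProb
  one_smul μ := toMeasure_injective <| by
    change (pushforwardProb (1 : G) μ : Measure X) = μ
    simp [toMeasure_pushforwardProb]
  mul_smul g h μ := toMeasure_injective <| by
    change (pushforwardProb (g * h) μ : Measure X) = pushforwardProb g (pushforwardProb h μ)
    simp only [toMeasure_pushforwardProb]
    rw [Measure.map_map (continuous_const_smul g).measurable (continuous_const_smul h).measurable]
    simp only [Function.comp_def, mul_smul]

theorem pushforwardProb_eq_smul (g : G) (μ : ProbabilityMeasure X) :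
    pushforwardProb g μ = g • μ := rfl

theorem toMeasure_smul (g : G) (μ : ProbabilityMeasure X) :
    ((g • μ : ProbabilityMeasure X) : Measure X) = (μ : Measure X).map (g • ·) :=
  toMeasure_pushforwardProb g μ

instance : ContinuousConstSMul G (ProbabilityMeasure X) :=
  ⟨fun g ↦ continuous_map (continuous_const_smul g)⟩

theorem smul_diracProba (g : G) (x : X) : g • diracProba x = diracProba (g • x) :=
  toMeasure_injective <| by
    rw [toMeasure_smul]
    exact Measure.map_dirac' (continuous_const_smul g).measurable x

theorem smul_closure_range_diracProba_subset (g : G) :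
    g • closure (range (diracProba : X → ProbabilityMeasure X)) ⊆
      closure (range diracProba) := by
  refine (smul_closure_subset g _).trans (closure_mono ?_)
  rintro _ ⟨_, ⟨x, rfl⟩, rfl⟩
  exact ⟨g • x, (smul_diracProba g x).symm⟩

theorem map_smul {π : X → Y} (hπ : Continuous π)
    (hπG : ∀ (g : G) (x : X), π (g • x) = g • π x) (g : G) (μ : ProbabilityMeasure X) :
    (g • μ).map hπ.measurable.aemeasurable = g • μ.map hπ.measurable.aemeasurable := by
  refine toMeasure_injective ?_
  simp only [toMeasure_map, toMeasure_smul]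
  rw [Measure.map_map hπ.measurable (continuous_const_smul g).measurable,
    Measure.map_map (continuous_const_smul g).measurable hπ.measurable]
  simp only [Function.comp_def, hπG]

end MeasureTheory.ProbabilityMeasure

theorem isStronglyProximal_iff :
    IsStronglyProximal G X ↔
      ∀ μ : ProbabilityMeasure X, ∃ x, diracProba x ∈ closure (MulAction.orbit G μ) := by
  have (μ : ProbabilityMeasure X) :
      {ν | ∃ g : G, ν = pushforwardProb g μ} = MulAction.orbit G μ := by
    ext ν
    simp [ProbabilityMeasure.pushforwardProb_eq_smul, MulAction.mem_orbit_iff, eq_comm]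
  simp only [IsStronglyProximal, this]
  rfl

theorem IsStronglyProximal.diracProba_mem (hmin : IsMinimalAction G X)
    (hprox : IsStronglyProximal G X) {L : Set (ProbabilityMeasure X)} (hL : IsClosed L)
    (hLG : ∀ g : G, g • L ⊆ L) (hne : L.Nonempty) (x : X) : diracProba x ∈ L := by
  obtain ⟨μ, hμ⟩ := hne
  obtain ⟨x₀, hx₀⟩ := isStronglyProximal_iff.1 hprox μ
  have hx₀L : diracProba x₀ ∈ L := hL.closure_orbit_subset hLG hμ hx₀
  have hDG (g : G) : g • (diracProba ⁻¹' L) ⊆ diracProba ⁻¹' L := by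
    rintro _ ⟨y, hy, rfl⟩
    simpa [← ProbabilityMeasure.smul_diracProba] using hLG g (smul_mem_smul_set hy)
  have : MulAction.IsMinimal G X := ⟨hmin⟩
  have hD := (eq_empty_or_univ_of_smul_invariant_closed G (hL.preimage continuous_diracProba)
    hDG).resolve_left (nonempty_of_mem (x := x₀) hx₀L).ne_empty
  exact hD.ge (mem_univ x)

theorem exists_map_mem_closure_range_diracProba [CompactSpace X] [T2Space X]
    (hmin : IsMinimalAction G Y) (hprox : IsStronglyProximal G Y) {π : X → Y}
    (hπ : Continuous π) (hπG : ∀ (g : G) (x : X), π (g • x) = g • π x)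
    {T : Set (ProbabilityMeasure X)} (hT : IsClosed T) (hTG : ∀ g : G, g • T ⊆ T)
    (hne : T.Nonempty) :
    ∃ ν ∈ T, ν.map hπ.measurable.aemeasurable ∈ closure (range diracProba) := by
  obtain ⟨μ, hμ⟩ := hne
  obtain ⟨x⟩ := nonempty_of_isProbabilityMeasure (μ : Measure X)
  set C := closure (MulAction.orbit G μ)
  have hCT : C ⊆ T := hT.closure_orbit_subset hTG hμ
  set p := fun ν : ProbabilityMeasure X ↦ ν.map hπ.measurable.aemeasurable
  have hpC : IsCompact (p '' C) :=
    isClosed_closure.isCompact.image (ProbabilityMeasure.continuous_map hπ)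
  have hpCG (g : G) : g • closure (p '' C) ⊆ closure (p '' C) := by
    refine (smul_closure_subset g _).trans (closure_mono ?_)
    rintro _ ⟨_, ⟨ν, hν, rfl⟩, rfl⟩
    exact ⟨g • ν, smul_closure_orbit_subset g μ (smul_mem_smul_set hν),
      ProbabilityMeasure.map_smul hπ hπG g ν⟩
  have hδ : diracProba (π x) ∈ closure (p '' C) :=
    hprox.diracProba_mem hmin isClosed_closure hpCG
      ⟨p μ, subset_closure ⟨μ, subset_closure (MulAction.mem_orbit_self μ), rfl⟩⟩ _
  obtain ⟨_, ⟨ν, hν, rfl⟩, hνδ⟩ := hpC.mem_closure_iff_exists_inseparable.1 hδ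
  exact ⟨ν, hCT hν,
    (hνδ.mem_closed_iff isClosed_closure).2 (subset_closure (mem_range_self _))⟩

end Action

section Family

variable {G X J : Type*} {Y : J → Type*} [Group G]
  [TopologicalSpace X] [MeasurableSpace X] [BorelSpace X] [MulAction G X] [ContinuousConstSMul G X]
  [∀ j, TopologicalSpace (Y j)] [∀ j, MeasurableSpace (Y j)] [∀ j, BorelSpace (Y j)]
  [∀ j, MulAction G (Y j)] [∀ j, ContinuousConstSMul G (Y j)]

theorem exists_forall_map_mem_closure_range_diracProba [CompactSpace X] [T2Space X]
    (hmin : ∀ j, IsMinimalAction G (Y j)) (hprox : ∀ j, IsStronglyProximal G (Y j))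
    {π : ∀ j, X → Y j} (hπ : ∀ j, Continuous (π j))
    (hπG : ∀ j (g : G) (x : X), π j (g • x) = g • π j x)
    {K : Set (ProbabilityMeasure X)} (hK : IsClosed K) (hKG : ∀ g : G, g • K ⊆ K)
    (hne : K.Nonempty) :
    ∃ ν ∈ K, ∀ j, ν.map (hπ j).measurable.aemeasurable ∈ closure (range diracProba) := by
  set S : J → Set (ProbabilityMeasure X) := fun j ↦
    (fun ν ↦ ν.map (hπ j).measurable.aemeasurable) ⁻¹' closure (range diracProba)
  have hS (j : J) : IsClosed (S j) :=
    isClosed_closure.preimage (ProbabilityMeasure.continuous_map (hπ j))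
  have hSG (j : J) (g : G) : g • S j ⊆ S j := by
    rintro _ ⟨ν, hν, rfl⟩
    simpa [S, ProbabilityMeasure.map_smul (hπ j) (hπG j)] using
      ProbabilityMeasure.smul_closure_range_diracProba_subset g (smul_mem_smul_set hν)
  have hfin (s : Finset J) : (K ∩ ⋂ j ∈ s, S j).Nonempty := by
    classical
    induction s using Finset.induction_on with
    | empty => simpa using hne
    | insert j s _ ih =>
      have hT : IsClosed (K ∩ ⋂ j ∈ s, S j) := hK.inter (isClosed_biInter fun j _ ↦ hS j)
      have hTG (g : G) : g • (K ∩ ⋂ j ∈ s, S j) ⊆ K ∩ ⋂ j ∈ s, S j :=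
        smul_set_inter_subset.trans <| inter_subset_inter (hKG g) <|
          (smul_set_iInter₂_subset g _).trans <| iInter₂_mono fun j _ ↦ hSG j g
      obtain ⟨ν, ⟨hνK, hνs⟩, hνj⟩ :=
        exists_map_mem_closure_range_diracProba (hmin j) (hprox j) (hπ j) (hπG j) hT hTG ih
      refine ⟨ν, hνK, ?_⟩
      rw [Finset.set_biInter_insert]
      exact ⟨hνj, hνs⟩
  obtain ⟨ν, hνK, hνS⟩ := hK.isCompact.inter_iInter_nonempty S hS hfin
  exact ⟨ν, hνK, mem_iInter.1 hνS⟩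

end Family

theorem isStronglyProximal_pi_general
    {G : Type*} {J : Type*} {Y : J → Type*} [Group G]
    [∀ j, TopologicalSpace (Y j)] [∀ j, CompactSpace (Y j)] [∀ j, T2Space (Y j)]
    [∀ j, MeasurableSpace (Y j)] [∀ j, BorelSpace (Y j)]
    [∀ j, MulAction G (Y j)] [∀ j, ContinuousConstSMul G (Y j)]
    [MeasurableSpace (∀ j, Y j)] [BorelSpace (∀ j, Y j)]
    (hmin : ∀ j, IsMinimalAction G (Y j)) (hprox : ∀ j, IsStronglyProximal G (Y j)) :
    IsStronglyProximal G (∀ j, Y j) := by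
  refine isStronglyProximal_iff.2 fun μ ↦ ?_
  obtain ⟨ν, hν, hνδ⟩ := exists_forall_map_mem_closure_range_diracProba hmin hprox
    (fun j ↦ continuous_apply j) (fun _ _ _ ↦ rfl) isClosed_closure
    (smul_closure_orbit_subset · μ) ⟨μ, subset_closure (MulAction.mem_orbit_self μ)⟩
  choose x hx using fun j ↦
    ProbabilityMeasure.exists_ae_le_nhds_of_mem_closure_range_diracProba (hνδ j)
  have hνx := ProbabilityMeasure.specializes_diracProba_of_ae_le_nhds (ae_le_nhds_pi hx)
  exact ⟨x, hνx.mem_closed isClosed_closure hν⟩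

/-- A product of `G`-boundaries, with the product topology and the diagonal action
(and the Borel σ-algebra of the product topology), is strongly proximal. -/
theorem isStronglyProximal_pi
    {G : Type*} {J : Type*} {Y : J → Type*} [Group G]
    [∀ j, TopologicalSpace (Y j)] [∀ j, CompactSpace (Y j)] [∀ j, T2Space (Y j)]
    [∀ j, Nonempty (Y j)] [∀ j, MeasurableSpace (Y j)] [∀ j, BorelSpace (Y j)]
    [∀ j, MulAction G (Y j)] [∀ j, ContinuousConstSMul G (Y j)]
    [MeasurableSpace (∀ j, Y j)] [BorelSpace (∀ j, Y j)]
    (hmin : ∀ j, IsMinimalAction G (Y j)) (hprox : ∀ j, IsStronglyProximal G (Y j)) :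
    IsStronglyProximal G (∀ j, Y j) :=
  isStronglyProximal_pi_general hmin hprox
end

section
/- Let G be a group and let B₁ and B₂ be two G-boundaries, each having the universal property that every G-boundary is the image of it under a continuous G-equivariant surjection. Then B₁ and B₂ are isomorphic as G-spaces: there exists a G-equivariant homeomorphism B₁ → B₂. -/
open MeasureTheory

universe u

/-- A `G`-boundary: a nonempty compact Hausdorff `G`-space (with its Borel σ-algebra) on which
the action of `G` is minimal and strongly proximal. -/
structure GBoundary (G : Type u) [Group G] where
  (carrier : Type u)
  [topo : TopologicalSpace carrier]
  [meas : MeasurableSpace carrier]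
  [action : MulAction G carrier]
  [cpt : CompactSpace carrier]
  [t2 : T2Space carrier]
  [nonempty : Nonempty carrier]
  [borel : BorelSpace carrier]
  [contSMul : ContinuousConstSMul G carrier]
  (minimal : IsMinimalAction G carrier)
  (stronglyProximal : IsStronglyProximal G carrier)

attribute [instance] GBoundary.topo GBoundary.meas GBoundary.action GBoundary.cpt
  GBoundary.t2 GBoundary.nonempty GBoundary.borel GBoundary.contSMul

/-! Two continuous equivariant maps `φ ψ` from a compact minimal `G`-space `Y` to a `G`-boundary
coincide. Strong proximality contracts `(δ_{φ y₀} + δ_{ψ y₀}) / 2` along a net `gᵢ` to some `δ_x`;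
at a limit point `y` of `gᵢ • y₀` this gives `(δ_{φ y} + δ_{ψ y}) / 2 = δ_x`, hence
`φ y = x = ψ y`, and by minimality the closed equalizer of `φ` and `ψ`, which contains the orbit
of `y`, is all of `Y`. Comparing `B₁ → B₂ → B₁` and `B₂ → B₁ → B₂` with the identities, the two
universal maps are mutually inverse. -/

open Set BoundedContinuousFunction

section Midpoint

variable {X : Type*} [MeasurableSpace X]

noncomputable def midpointDirac (a b : X) : ProbabilityMeasure X :=
  ⟨(2⁻¹ : ENNReal) • Measure.dirac a + (2⁻¹ : ENNReal) • Measure.dirac b,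
    ⟨by simp [ENNReal.inv_two_add_inv_two]⟩⟩

lemma integral_midpointDirac [MeasurableSingletonClass X] (f : X → ℝ) (a b : X) :
    ∫ x, f x ∂(midpointDirac a b : Measure X) = (f a + f b) / 2 := by
  simp only [midpointDirac, ProbabilityMeasure.coe_mk]
  rw [integral_add_measure, integral_smul_measure, integral_smul_measure, integral_dirac,
    integral_dirac]
  · simp [ENNReal.toReal_inv]; ring
  all_goals exact (integrable_dirac (by simp)).smul_measure (by simp)

lemma pushforwardProb_midpointDirac {G : Type*} [Group G] [TopologicalSpace X] [BorelSpace X]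
    [MulAction G X] [ContinuousConstSMul G X] (g : G) (a b : X) :
    pushforwardProb g (midpointDirac a b) = midpointDirac (g • a) (g • b) := by
  have hg : Measurable (fun x : X => g • x) := (continuous_const_smul g).measurable
  apply ProbabilityMeasure.toMeasure_injective
  rw [pushforwardProb, ProbabilityMeasure.toMeasure_map]
  simp only [midpointDirac, ProbabilityMeasure.coe_mk, Measure.map_add _ _ hg, Measure.map_smul,
    Measure.map_dirac' hg]

end Midpoint

lemma eq_of_forall_apply_eq_midpoint {X : Type*} [TopologicalSpace X] [NormalSpace X] [T1Space X]
    {x p q : X} (h : ∀ f : X →ᵇ ℝ, f x = (f p + f q) / 2) : p = x := by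
  by_contra hpx
  obtain ⟨f, hfx, hfp, hf01⟩ := exists_bounded_zero_one_of_closed (isClosed_singleton (x := x))
    (isClosed_singleton (x := p)) (disjoint_singleton.2 (Ne.symm hpx))
  have := h f
  rw [hfx rfl, hfp rfl, Pi.zero_apply, Pi.one_apply] at this
  linarith [(hf01 q).1]

lemma mem_range_of_mem_closure_of_image_subset {Y Z T : Type*} [TopologicalSpace Y]
    [CompactSpace Y] [TopologicalSpace Z] [TopologicalSpace T] [T2Space T]
    {Φ : Z → T} (hΦ : Continuous Φ) {Ψ : Y → T} (hΨ : Continuous Ψ) {S : Set Z}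
    (hS : Φ '' S ⊆ range Ψ) {z : Z} (hz : z ∈ closure S) : Φ z ∈ range Ψ :=
  (isCompact_range hΨ).isClosed.closure_subset_iff.2 hS (image_closure_subset_closure_image hΦ
    (mem_image_of_mem Φ hz))

section Equivariant

variable {G X Y : Type*} [Group G] [TopologicalSpace X] [MulAction G X]
  [TopologicalSpace Y] [MulAction G Y] {φ ψ : Y → X}

lemma IsMinimalAction.eq_of_apply_eq [T2Space X] (hY : IsMinimalAction G Y)
    (hφ : Continuous φ) (hψ : Continuous ψ) (hφG : ∀ (g : G) y, φ (g • y) = g • φ y)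
    (hψG : ∀ (g : G) y, ψ (g • y) = g • ψ y) {y : Y} (hy : φ y = ψ y) : φ = ψ :=
  hφ.ext_on (hY y) hψ <| by
    rintro _ ⟨g, rfl⟩
    simp only [hφG, hψG, hy]

lemma IsStronglyProximal.exists_apply_eq_apply [MeasurableSpace X] [BorelSpace X]
    [ContinuousConstSMul G X] [T2Space X] [CompactSpace X] (hX : IsStronglyProximal G X)
    [CompactSpace Y] [Nonempty Y] (hφ : Continuous φ) (hψ : Continuous ψ)
    (hφG : ∀ (g : G) y, φ (g • y) = g • φ y) (hψG : ∀ (g : G) y, ψ (g • y) = g • ψ y) :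
    ∃ y, φ y = ψ y := by
  obtain ⟨y₀⟩ := ‹Nonempty Y›
  obtain ⟨x, hx⟩ := hX (midpointDirac (φ y₀) (ψ y₀))
  -- Borel measures on a non-metrizable compact space need not be separated by continuous
  -- functions, so limits are taken in the Hausdorff space of their integrals instead.
  let Φ : ProbabilityMeasure X → (X →ᵇ ℝ) → ℝ := fun ν f => ∫ z, f z ∂(ν : Measure X)
  let Ψ : Y → (X →ᵇ ℝ) → ℝ := fun y f => (f (φ y) + f (ψ y)) / 2
  have hΦ : Continuous Φ := continuous_pi fun f =>
    ProbabilityMeasure.continuous_integral_boundedContinuousFunction f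
  have hΨ : Continuous Ψ := continuous_pi fun f =>
    ((f.continuous.comp hφ).add (f.continuous.comp hψ)).div_const 2
  have horbit : Φ '' {ν | ∃ g : G, ν = pushforwardProb g (midpointDirac (φ y₀) (ψ y₀))}
      ⊆ range Ψ := by
    rintro _ ⟨_, ⟨g, rfl⟩, rfl⟩
    refine ⟨g • y₀, funext fun f => ?_⟩
    simp only [Φ, Ψ, pushforwardProb_midpointDirac, integral_midpointDirac, hφG, hψG]
  obtain ⟨y, hy⟩ := mem_range_of_mem_closure_of_image_subset hΦ hΨ horbit hx
  have hxy : ∀ f : X →ᵇ ℝ, f x = (f (φ y) + f (ψ y)) / 2 := fun f => by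
    simpa [Φ, Ψ, diracProb] using (congrFun hy f).symm
  have hφx : φ y = x := eq_of_forall_apply_eq_midpoint hxy
  have hψx : ψ y = x := eq_of_forall_apply_eq_midpoint fun f => (hxy f).trans (by ring)
  exact ⟨y, hφx.trans hψx.symm⟩

lemma IsStronglyProximal.eq_of_isMinimalAction [MeasurableSpace X] [BorelSpace X]
    [ContinuousConstSMul G X] [T2Space X] [CompactSpace X] (hX : IsStronglyProximal G X)
    [CompactSpace Y] [Nonempty Y] (hY : IsMinimalAction G Y) (hφ : Continuous φ)
    (hψ : Continuous ψ) (hφG : ∀ (g : G) y, φ (g • y) = g • φ y)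
    (hψG : ∀ (g : G) y, ψ (g • y) = g • ψ y) : φ = ψ :=
  let ⟨_, hy⟩ := hX.exists_apply_eq_apply hφ hψ hφG hψG
  hY.eq_of_apply_eq hφ hψ hφG hψG hy

end Equivariant

/-- Any two universal `G`-boundaries (each admitting a continuous `G`-equivariant
surjection onto every `G`-boundary) are isomorphic as `G`-spaces, i.e. there is a
`G`-equivariant homeomorphism between them. -/
theorem universal_boundary_unique {G : Type u} [Group G] (B₁ B₂ : GBoundary G)
    (h₁ : ∀ Y : GBoundary G, ∃ f : B₁.carrier → Y.carrier,
      Continuous f ∧ (∀ (g : G) (x : B₁.carrier), f (g • x) = g • f x) ∧ Function.Surjective f)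
    (h₂ : ∀ Y : GBoundary G, ∃ f : B₂.carrier → Y.carrier,
      Continuous f ∧ (∀ (g : G) (x : B₂.carrier), f (g • x) = g • f x) ∧ Function.Surjective f) :
    ∃ e : B₁.carrier ≃ₜ B₂.carrier, ∀ (g : G) (x : B₁.carrier), e (g • x) = g • e x := by
  obtain ⟨f, hf, hfG, -⟩ := h₁ B₂
  obtain ⟨f', hf', hf'G, -⟩ := h₂ B₁
  have hf'f : f' ∘ f = id := B₁.stronglyProximal.eq_of_isMinimalAction B₁.minimal
    (hf'.comp hf) continuous_id (fun g x => by simp [hfG, hf'G]) fun _ _ => rfl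
  have hff' : f ∘ f' = id := B₂.stronglyProximal.eq_of_isMinimalAction B₂.minimal
    (hf.comp hf') continuous_id (fun g x => by simp [hfG, hf'G]) fun _ _ => rfl
  exact ⟨⟨⟨f, f', congrFun hf'f, congrFun hff'⟩, hf, hf'⟩, hfG⟩
end

section
/- Let G be a group acting minimally by homeomorphisms on a nonempty compact Hausdorff space X, and let V ⊆ X be a nonempty open subset. Then there exist finitely many elements t₁, …, tₙ ∈ G and continuous functions h₁, …, hₙ : X → [0,1] with Σᵢ hᵢ = 1 and supp(hᵢ) ⊆ tᵢ·V for each i, such that for every Radon probability measure ν on X the measure Σᵢ (tᵢ⁻¹)_*(hᵢ·ν) — where hᵢ·ν denotes ν with density hᵢ and (tᵢ⁻¹)_* denotes pushforward along the homeomorphism x ↦ tᵢ⁻¹·x — is a probability measure that vanishes outside the closure of V (it assigns measure zero to the complement of the closure of V). -/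
/-!
By minimality every point of `X` has a translate in `V`, so the translates `g • V` cover `X`;
by compactness finitely many `tᵢ • V` do, and we take a partition of unity `hᵢ` subordinate to
them. Since `∑ hᵢ = 1`, the measures `(tᵢ⁻¹)_*(hᵢ · ν)` have total mass `ν X = 1`, and since
`hᵢ` vanishes off `tᵢ • V`, each of them is carried by `tᵢ⁻¹ • tᵢ • V = V`.
-/

open MeasureTheory Pointwise

namespace IsMinimalAction

variable {G X : Type*} [Group G] [TopologicalSpace X] [MulAction G X]

theorem iUnion_smul_eq_univ (hmin : IsMinimalAction G X) {V : Set X} (hV : IsOpen V)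
    (hVne : V.Nonempty) : ⋃ g : G, g • V = Set.univ := by
  refine Set.eq_univ_of_forall fun x => Set.mem_iUnion.2 ?_
  obtain ⟨_, ⟨g, rfl⟩, hgx⟩ := (hmin x).exists_mem_open hV hVne
  exact ⟨g⁻¹, Set.mem_smul_set_iff_inv_smul_mem.2 (by rwa [inv_inv])⟩

theorem exists_fin_smul_cover [CompactSpace X] [ContinuousConstSMul G X]
    (hmin : IsMinimalAction G X) {V : Set X} (hV : IsOpen V) (hVne : V.Nonempty) :
    ∃ (n : ℕ) (t : Fin n → G), Set.univ ⊆ ⋃ i, t i • V := by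
  obtain ⟨s, hs⟩ := isCompact_univ.elim_finite_subcover (fun g : G => g • V)
    (fun g => hV.smul g) (hmin.iUnion_smul_eq_univ hV hVne).ge
  refine ⟨s.card, fun i => s.equivFin.symm i, fun x hx => ?_⟩
  obtain ⟨g, hg, hgx⟩ := Set.mem_iUnion₂.1 (hs hx)
  exact Set.mem_iUnion.2 ⟨s.equivFin ⟨g, hg⟩, by simpa using hgx⟩

end IsMinimalAction

section WeightedPushforward

variable {ι X Y : Type*} [Fintype ι] [MeasurableSpace X] [MeasurableSpace Y]
  {φ : ι → X → Y} {h : ι → X → ℝ}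

theorem sum_map_withDensity_apply_univ (ν : Measure X) (hφ : ∀ i, Measurable (φ i))
    (hh : ∀ i, Measurable (h i)) (hh_nonneg : ∀ i x, 0 ≤ h i x) (hh_sum : ∀ x, ∑ i, h i x = 1) :
    (∑ i, (ν.withDensity fun x => ENNReal.ofReal (h i x)).map (φ i)) Set.univ = ν Set.univ := by
  have hsum_ofReal : ∀ x, ∑ i, ENNReal.ofReal (h i x) = 1 := fun x => by
    rw [← ENNReal.ofReal_sum_of_nonneg fun i _ => hh_nonneg i x, hh_sum x, ENNReal.ofReal_one]
  simp only [Measure.coe_finsetSum, Finset.sum_apply, Measure.map_apply (hφ _) .univ,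
    Set.preimage_univ, withDensity_apply _ .univ, Measure.restrict_univ]
  rw [← lintegral_finsetSum _ fun i _ => (hh i).ennreal_ofReal]
  simp only [hsum_ofReal, lintegral_one]

theorem sum_map_withDensity_apply_compl_eq_zero (ν : Measure X) (hφ : ∀ i, Measurable (φ i))
    (hh : ∀ i, Measurable (h i)) {t : Set Y} (ht : MeasurableSet t)
    (hsupp : ∀ i, Function.support (h i) ⊆ φ i ⁻¹' t) :
    (∑ i, (ν.withDensity fun x => ENNReal.ofReal (h i x)).map (φ i)) tᶜ = 0 := by
  simp only [Measure.coe_finsetSum, Finset.sum_apply]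
  refine Finset.sum_eq_zero fun i _ => ?_
  rw [Measure.map_apply (hφ i) ht.compl, withDensity_apply_eq_zero (hh i).ennreal_ofReal]
  convert measure_empty (μ := ν)
  refine Set.eq_empty_of_forall_notMem fun x ⟨hx, hxt⟩ => hxt (hsupp i ?_)
  exact fun hzero => hx (by simp [hzero])

end WeightedPushforward

theorem exists_partition_contracting_into_open_general
    {G X : Type*} [Group G] [TopologicalSpace X] [CompactSpace X] [T2Space X]
    [MeasurableSpace X] [BorelSpace X] [MulAction G X] [ContinuousConstSMul G X]
    (hmin : IsMinimalAction G X) (V : Set X) (hV : IsOpen V) (hVne : V.Nonempty) :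
    ∃ (n : ℕ) (t : Fin n → G) (h : Fin n → C(X, ℝ)),
      (∀ i, ∀ x, 0 ≤ h i x ∧ h i x ≤ 1) ∧
      (∀ x, ∑ i, h i x = 1) ∧
      (∀ i, tsupport ⇑(h i) ⊆ (t i) • V) ∧
      (∀ ν : Measure X, IsProbabilityMeasure ν →
        IsProbabilityMeasure
          (∑ i, Measure.map (fun x => (t i)⁻¹ • x)
            (ν.withDensity fun x => ENNReal.ofReal (h i x))) ∧
        (∑ i, Measure.map (fun x => (t i)⁻¹ • x)
            (ν.withDensity fun x => ENNReal.ofReal (h i x))) ((closure V)ᶜ) = 0) := by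
  obtain ⟨n, t, hcover⟩ := hmin.exists_fin_smul_cover hV hVne
  obtain ⟨f, hf⟩ := PartitionOfUnity.exists_isSubordinate isClosed_univ
    (fun i => t i • V) (fun i => hV.smul (t i)) hcover
  have hsum : ∀ x, ∑ i, f i x = 1 := fun x => by
    simpa [finsum_eq_sum_of_fintype] using f.sum_eq_one (Set.mem_univ x)
  have hφ : ∀ i, Measurable fun x : X => (t i)⁻¹ • x := fun i => measurable_const_smul _
  have hmeas : ∀ i, Measurable (f i) := fun i => (f i).continuous.measurable
  have hsupp : ∀ i, Function.support (f i) ⊆ (fun x => (t i)⁻¹ • x) ⁻¹' closure V := fun i =>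
    calc Function.support (f i) ⊆ t i • V := (subset_tsupport _).trans (hf i)
      _ = (fun x => (t i)⁻¹ • x) ⁻¹' V := (Set.preimage_smul_inv _ _).symm
      _ ⊆ _ := Set.preimage_mono subset_closure
  refine ⟨n, t, fun i => f i, fun i x => ⟨f.nonneg i x, f.le_one i x⟩, hsum, hf,
    fun ν hν => ⟨?_, ?_⟩⟩
  · exact ⟨by rw [sum_map_withDensity_apply_univ ν hφ hmeas f.nonneg hsum, measure_univ]⟩
  · exact sum_map_withDensity_apply_compl_eq_zero ν hφ hmeas isClosed_closure.measurableSet hsupp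

/-- For a minimal action of `G` on a nonempty compact Hausdorff space `X` and a
nonempty open set `V ⊆ X`, there are finitely many group elements `tᵢ` and continuous functions
`hᵢ : X → [0,1]` with `∑ᵢ hᵢ = 1` and `supp hᵢ ⊆ tᵢ • V`, such that for every probability
measure `ν` on `X`, the measure `∑ᵢ (tᵢ⁻¹)_*(hᵢ · ν)` is a probability measure vanishing
outside the closure of `V`. -/
theorem exists_partition_contracting_into_open
    {G X : Type*} [Group G] [TopologicalSpace X] [CompactSpace X] [T2Space X] [Nonempty X]
    [MeasurableSpace X] [BorelSpace X] [MulAction G X] [ContinuousConstSMul G X]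
    (hmin : IsMinimalAction G X) (V : Set X) (hV : IsOpen V) (hVne : V.Nonempty) :
    ∃ (n : ℕ) (t : Fin n → G) (h : Fin n → C(X, ℝ)),
      (∀ i, ∀ x, 0 ≤ h i x ∧ h i x ≤ 1) ∧
      (∀ x, ∑ i, h i x = 1) ∧
      (∀ i, tsupport ⇑(h i) ⊆ (t i) • V) ∧
      (∀ ν : Measure X, IsProbabilityMeasure ν →
        IsProbabilityMeasure
          (∑ i, Measure.map (fun x => (t i)⁻¹ • x)
            (ν.withDensity fun x => ENNReal.ofReal (h i x))) ∧
        (∑ i, Measure.map (fun x => (t i)⁻¹ • x)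
            (ν.withDensity fun x => ENNReal.ofReal (h i x))) ((closure V)ᶜ) = 0) :=
  exists_partition_contracting_into_open_general hmin V hV hVne
end

section
/- Let X be an extremally disconnected, locally compact Hausdorff space and let h : X → X be a homeomorphism. Then the fixed-point set {x ∈ X : h(x) = x} is a clopen subset of X. Consequently, for any group G acting by homeomorphisms on X, the isotropy set {(g, x) ∈ G × X : g·x = x} is clopen in G × X when G carries the discrete topology. -/
open Set

private lemma fix_clopen {X : Type*} [TopologicalSpace X] [ExtremallyDisconnected X]
    [T2Space X] (h : X ≃ₜ X) : IsClopen {x : X | h x = x} := by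
  classical
  set S : Set (Set X) := {V | IsOpen V ∧ Disjoint V (h '' V)} with hS
  have hzorn : ∃ m, Maximal (· ∈ S) m := by
    apply zorn_subset
    intro c hcS hchain
    refine ⟨⋃₀ c, ⟨isOpen_sUnion fun V hV => (hcS hV).1, ?_⟩, fun s hs => subset_sUnion_of_mem hs⟩
    rw [disjoint_left]
    rintro x ⟨V, hV, hxV⟩ ⟨y, ⟨W, hW, hyW⟩, rfl⟩
    rcases hchain.total hV hW with hVW | hWV
    · exact ((hcS hW).2).ne_of_mem (hVW hxV) (mem_image_of_mem _ hyW) rfl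
    · exact ((hcS hV).2).ne_of_mem hxV (mem_image_of_mem _ (hWV hyW)) rfl
  obtain ⟨V, ⟨hVopen, hVdisj⟩, hVmax⟩ := hzorn
  -- the three closures
  set C1 := closure V
  set C2 := closure (h '' V)
  set C3 := closure (h ⁻¹' V)
  have hVopen' : IsOpen (h '' V) := h.isOpen_image.mpr hVopen
  have hVopen'' : IsOpen (h ⁻¹' V) := hVopen.preimage h.continuous
  have hC1open : IsOpen C1 := ExtremallyDisconnected.open_closure _ hVopen
  have hC2open : IsOpen C2 := ExtremallyDisconnected.open_closure _ hVopen'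
  have hC3open : IsOpen C3 := ExtremallyDisconnected.open_closure _ hVopen''
  have himg_closure : ∀ A : Set X, h '' closure A = closure (h '' A) := fun A =>
    h.image_closure A
  -- disjointness facts
  have d12 : Disjoint C1 C2 :=
    ExtremallyDisconnected.disjoint_closure_of_disjoint_isOpen hVdisj hVopen hVopen'
  have d2 : Disjoint (h '' V) (h '' (h '' V)) := by
    rw [disjoint_image_iff h.injective] at *; exact hVdisj
  have d2' : Disjoint C2 (closure (h '' (h '' V))) :=
    ExtremallyDisconnected.disjoint_closure_of_disjoint_isOpen d2 hVopen'
      (h.isOpen_image.mpr hVopen')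
  have d3 : Disjoint (h ⁻¹' V) V := by
    rw [disjoint_left]
    intro x hx hxV
    exact hVdisj.ne_of_mem hx (mem_image_of_mem _ hxV) rfl
  have d3' : Disjoint C3 C1 :=
    ExtremallyDisconnected.disjoint_closure_of_disjoint_isOpen d3 hVopen'' hVopen
  -- Fix = (C1 ∪ C2 ∪ C3)ᶜ
  have key : {x : X | h x = x} = (C1 ∪ C2 ∪ C3)ᶜ := by
    ext x
    simp only [mem_setOf_eq, mem_compl_iff, mem_union, not_or]
    constructor
    · rintro hx
      refine ⟨⟨fun hx1 => ?_, fun hx2 => ?_⟩, fun hx3 => ?_⟩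
      · have : h x ∈ h '' C1 := mem_image_of_mem _ hx1
        rw [himg_closure, hx] at this
        exact d12.ne_of_mem hx1 this rfl
      · have : h x ∈ h '' C2 := mem_image_of_mem _ hx2
        rw [himg_closure, hx] at this
        exact d2'.ne_of_mem hx2 this rfl
      · have : h x ∈ h '' C3 := mem_image_of_mem _ hx3
        rw [himg_closure, hx] at this
        have himg : h '' (h ⁻¹' V) = V := h.image_preimage V
        rw [himg] at this
        exact d3'.ne_of_mem hx3 this rfl
    · rintro ⟨⟨hx1, hx2⟩, hx3⟩
      by_contra hne
      -- build a bigger element of S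
      obtain ⟨A, B, hA, hB, hhxA, hxB, hAB⟩ := t2_separation hne
      set W := (B ∩ h ⁻¹' A) \ (C1 ∪ C2 ∪ C3) with hW
      have hWopen : IsOpen W :=
        ((hB.inter (hA.preimage h.continuous)).sdiff
          ((isClosed_closure.union isClosed_closure).union isClosed_closure))
      have hxW : x ∈ W := ⟨⟨hxB, hhxA⟩, by simp [hx1, hx2, hx3]⟩
      have hVW : (V ∪ W) ∈ S := by
        refine ⟨hVopen.union hWopen, ?_⟩
        rw [image_union, disjoint_union_left, disjoint_union_right, disjoint_union_right]
        refine ⟨⟨hVdisj, ?_⟩, ?_, ?_⟩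
        · -- V ∩ h '' W = ∅
          rw [disjoint_left]
          rintro y hyV ⟨z, hzW, rfl⟩
          have hz3 : z ∈ C3 := subset_closure hyV
          exact hzW.2 (Or.inr hz3)
        · -- W ∩ h '' V = ∅
          rw [disjoint_left]
          intro y hyW hyhV
          exact hyW.2 (Or.inl (Or.inr (subset_closure hyhV)))
        · -- W ∩ h '' W = ∅
          rw [disjoint_left]
          rintro y hyW ⟨z, hzW, rfl⟩
          exact hAB.ne_of_mem hzW.1.2 hyW.1.1 rfl
      have : V ∪ W ⊆ V := hVmax hVW subset_union_left
      have hxV : x ∈ V := this (Or.inr hxW)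
      exact hx1 (subset_closure hxV)
  rw [key]
  refine ⟨isClosed_compl_iff.mpr ((hC1open.union hC2open).union hC3open),
    isOpen_compl_iff.mpr (((isClosed_closure.union isClosed_closure).union isClosed_closure))⟩

/-- On an extremally disconnected, locally compact Hausdorff space, the
fixed-point set of any homeomorphism is clopen; consequently, for any group acting by
homeomorphisms, the isotropy set `{(g, x) | g • x = x}` is clopen in `G × X` when `G` carries
the discrete topology. -/
theorem isClopen_fixedPoints_of_extremallyDisconnected
    {X : Type*} [TopologicalSpace X] [ExtremallyDisconnected X] [LocallyCompactSpace X]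
    [T2Space X] (h : X ≃ₜ X) :
    IsClopen {x : X | h x = x} ∧
    ∀ (G : Type*) [TopologicalSpace G] [DiscreteTopology G] [Group G] [MulAction G X]
      [ContinuousConstSMul G X],
      IsClopen {p : G × X | p.1 • p.2 = p.2} := by
  refine ⟨fix_clopen h, ?_⟩
  intro G _ _ _ _ _
  have hfix : ∀ g : G, IsClopen {x : X | g • x = x} := fun g =>
    fix_clopen (Homeomorph.smul g)
  have heq : {p : G × X | p.1 • p.2 = p.2} =
      ⋃ g : G, ({g} : Set G) ×ˢ {x : X | g • x = x} := by
    ext ⟨g, x⟩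
    simp [Set.mem_prod]
  constructor
  · rw [← isOpen_compl_iff, heq]
    have : (⋃ g : G, ({g} : Set G) ×ˢ {x : X | g • x = x})ᶜ =
        ⋃ g : G, ({g} : Set G) ×ˢ {x : X | g • x = x}ᶜ := by
      ext ⟨g', x⟩
      simp only [mem_compl_iff, mem_iUnion, mem_prod, mem_singleton_iff, mem_setOf_eq,
        not_exists, not_and]
      constructor
      · intro H
        exact ⟨g', rfl, H g' rfl⟩
      · rintro ⟨i, rfl, hi⟩ j rfl
        exact hi
    rw [this]
    exact isOpen_iUnion fun g =>
      (isOpen_discrete _).prod (hfix g).compl.isOpen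
  · rw [heq]
    exact isOpen_iUnion fun g => (isOpen_discrete _).prod (hfix g).isOpen
end

section
/- Let G be a group acting by homeomorphisms on compact Hausdorff spaces X and Y, and let p : Y → X be a continuous G-equivariant surjection. Assume Y is totally disconnected and that Y is irreducible over X, meaning every closed G-invariant subset A ⊆ Y with p(A) = X equals Y. Assume additionally that the action of G on X is minimal or that G is countable. Then for every nonempty open subset U ⊆ Y, the image p(U) has nonempty interior in X. -/
/-!
Shrink `U` to a nonempty clopen set `V`. The complement `A` of the open invariant set `G • V` is
closed, invariant and proper, so by irreducibility `p '' A` is a proper closed subset of `X`.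
Over a closed neighbourhood `F` of a point outside `p '' A`, the compact set `p ⁻¹' F` is covered
by finitely many translates `g • V`, so `F` is covered by the finitely many closed sets
`p '' (g • V) = g • p '' V`; one of them has nonempty interior, and translating back by `g⁻¹`
gives an interior point of `p '' V ⊆ p '' U`.
-/

open Set Pointwise

theorem Finset.exists_nonempty_interior_of_isClosed {X ι : Type*} [TopologicalSpace X]
    (t : Finset ι) {C : ι → Set X} (hC : ∀ i ∈ t, IsClosed (C i))
    (h : (interior (⋃ i ∈ t, C i)).Nonempty) : ∃ i ∈ t, (interior (C i)).Nonempty := by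
  classical
  contrapose! h
  induction t using Finset.induction_on with
  | empty => simp
  | insert a s _ ih =>
    rw [Finset.set_biUnion_insert,
      interior_union_isClosed_of_interior_empty (hC a (s.mem_insert_self a))
        (ih (fun i hi => hC i (Finset.mem_insert_of_mem hi))
          (fun i hi => h i (Finset.mem_insert_of_mem hi))),
      h a (s.mem_insert_self a)]

section Irreducible

variable {G X Y : Type*} [Group G] [MulAction G Y]

theorem smul_mem_compl_iUnion_smul {V : Set Y} (g : G) {y : Y}
    (hy : y ∈ (⋃ h : G, h • V)ᶜ) : g • y ∈ (⋃ h : G, h • V)ᶜ := by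
  simp only [mem_compl_iff, mem_iUnion, not_exists, mem_smul_set_iff_inv_smul_mem] at hy ⊢
  intro h hgy
  apply hy (g⁻¹ * h)
  rwa [mul_inv_rev, inv_inv, mul_smul]

theorem image_compl_iUnion_smul_ne_univ [TopologicalSpace Y] [ContinuousConstSMul G Y]
    {p : Y → X}
    (hirr : ∀ A : Set Y, IsClosed A → (∀ (g : G), ∀ y ∈ A, g • y ∈ A) →
      p '' A = univ → A = univ)
    {V : Set Y} (hV : IsOpen V) (hVne : V.Nonempty) :
    p '' (⋃ g : G, g • V)ᶜ ≠ univ := by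
  intro hsurj
  have hA := hirr _ (isOpen_iUnion fun g => hV.smul g).isClosed_compl
    (fun g _ hy => smul_mem_compl_iUnion_smul g hy) hsurj
  obtain ⟨y, hy⟩ := hVne
  have hyA : y ∈ (⋃ g : G, g • V)ᶜ := hA ▸ mem_univ y
  exact hyA (mem_iUnion.2 ⟨1, by rwa [one_smul]⟩)

theorem exists_nonempty_interior_image_smul [TopologicalSpace Y] [ContinuousConstSMul G Y]
    [CompactSpace Y] [TopologicalSpace X] [T2Space X] [RegularSpace X] {p : Y → X}
    (hpc : Continuous p) (hps : Function.Surjective p) {V : Set Y} (hV : IsClopen V)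
    {W : Set X} (hW : IsOpen W) (hWne : W.Nonempty) (hWV : p ⁻¹' W ⊆ ⋃ g : G, g • V) :
    ∃ g : G, (interior (p '' (g • V))).Nonempty := by
  obtain ⟨x, hx⟩ := hWne
  obtain ⟨F, hFx, hF, hFW⟩ := exists_mem_nhds_isClosed_subset (hW.mem_nhds hx)
  obtain ⟨t, ht⟩ := (hF.preimage hpc).isCompact.elim_finite_subcover (fun g : G => g • V)
    (fun g => hV.isOpen.smul g) ((preimage_mono hFW).trans hWV)
  have hFt : F ⊆ ⋃ g ∈ t, p '' (g • V) := by
    intro z hz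
    obtain ⟨y, rfl⟩ := hps z
    obtain ⟨g, hg, hyg⟩ := mem_iUnion₂.1 (ht hz)
    exact mem_iUnion₂.2 ⟨g, hg, mem_image_of_mem p hyg⟩
  obtain ⟨g, -, hg⟩ := t.exists_nonempty_interior_of_isClosed
    (fun g _ => ((hV.isClosed.smul g).isCompact.image hpc).isClosed)
    ⟨x, interior_mono hFt (mem_interior_iff_mem_nhds.2 hFx)⟩
  exact ⟨g, hg⟩

end Irreducible

theorem nonempty_interior_image_of_irreducible_general
    {G X Y : Type*} [Group G]
    [TopologicalSpace X] [CompactSpace X] [T2Space X] [MulAction G X] [ContinuousConstSMul G X]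
    [TopologicalSpace Y] [CompactSpace Y] [T2Space Y] [TotallyDisconnectedSpace Y]
    [MulAction G Y] [ContinuousConstSMul G Y]
    (p : Y → X) (hpc : Continuous p) (hps : Function.Surjective p)
    (hpe : ∀ (g : G) (y : Y), p (g • y) = g • p y)
    (hirr : ∀ A : Set Y, IsClosed A → (∀ (g : G), ∀ y ∈ A, g • y ∈ A) →
      p '' A = Set.univ → A = Set.univ)
    (U : Set Y) (hU : IsOpen U) (hUne : U.Nonempty) :
    (interior (p '' U)).Nonempty := by
  obtain ⟨y, hy⟩ := hUne
  obtain ⟨V, hV, hyV, hVU⟩ := compact_exists_isClopen_in_isOpen hU hy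
  set A := (⋃ g : G, g • V)ᶜ
  have hpA : IsClosed (p '' A) :=
    ((isOpen_iUnion fun g => hV.isOpen.smul g).isClosed_compl.isCompact.image hpc).isClosed
  obtain ⟨g, hg⟩ := exists_nonempty_interior_image_smul hpc hps hV hpA.isOpen_compl
    (nonempty_compl.2 (image_compl_iUnion_smul_ne_univ hirr hV.isOpen ⟨y, hyV⟩))
    (fun z hz => not_not.1 fun hzA => hz (mem_image_of_mem p hzA))
  let f : Y →[G] X := ⟨p, hpe⟩
  rw [show p '' (g • V) = g • p '' V from image_smul_set f g V, interior_smul,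
    smul_set_nonempty] at hg
  exact hg.mono (interior_mono (image_mono hVU))

/-- Let `p : Y → X` be a continuous `G`-equivariant surjection of compact
Hausdorff `G`-spaces, with `Y` totally disconnected and irreducible over `X` (every closed
`G`-invariant subset of `Y` mapping onto `X` is all of `Y`).  If the action on `X` is minimal
or `G` is countable, then the image of every nonempty open subset of `Y` has nonempty interior
in `X`. -/
theorem nonempty_interior_image_of_irreducible
    {G X Y : Type*} [Group G]
    [TopologicalSpace X] [CompactSpace X] [T2Space X] [MulAction G X] [ContinuousConstSMul G X]
    [TopologicalSpace Y] [CompactSpace Y] [T2Space Y] [TotallyDisconnectedSpace Y]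
    [MulAction G Y] [ContinuousConstSMul G Y]
    (p : Y → X) (hpc : Continuous p) (hps : Function.Surjective p)
    (hpe : ∀ (g : G) (y : Y), p (g • y) = g • p y)
    (hirr : ∀ A : Set Y, IsClosed A → (∀ (g : G), ∀ y ∈ A, g • y ∈ A) →
      p '' A = Set.univ → A = Set.univ)
    (hmc : IsMinimalAction G X ∨ Countable G)
    (U : Set Y) (hU : IsOpen U) (hUne : U.Nonempty) :
    (interior (p '' U)).Nonempty :=
  nonempty_interior_image_of_irreducible_general p hpc hps hpe hirr U hU hUne
end

section
/- Let G be a group acting by homeomorphisms on compact Hausdorff spaces X and Y, and let p : Y → X be a continuous G-equivariant surjection. Assume Y is totally disconnected and that Y is irreducible over X, meaning every closed G-invariant subset A ⊆ Y with p(A) = X equals Y. Assume additionally that the action of G on X is minimal or that G is countable. Then for every dense subset D ⊆ X, the preimage p⁻¹(D) is dense in Y. -/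
open Pointwise


/-- A nonempty open set covered by finitely many closed sets: one of them has
nonempty interior. -/
lemma aux_finset_closed_cover {α ι : Type*} [TopologicalSpace α] (F : Finset ι)
    (C : ι → Set α) (hC : ∀ i, IsClosed (C i)) :
    ∀ O : Set α, IsOpen O → O.Nonempty → O ⊆ ⋃ i ∈ F, C i →
      ∃ i ∈ F, (interior (C i)).Nonempty := by
  classical
  induction F using Finset.induction_on with
  | empty =>
    intro O _ hne hsub
    obtain ⟨x, hx⟩ := hne
    simpa using hsub hx
  | @insert a F ha ih =>
    intro O hO hne hsub
    by_cases h : (O ∩ (C a)ᶜ).Nonempty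
    · have hsub' : O ∩ (C a)ᶜ ⊆ ⋃ i ∈ F, C i := by
        intro x hx
        have := hsub hx.1
        simp only [Finset.mem_insert, Set.mem_iUnion] at this ⊢
        rcases this with ⟨i, hi, hxi⟩
        rcases hi with rfl | hi
        · exact absurd hxi hx.2
        · exact ⟨i, hi, hxi⟩
      obtain ⟨i, hiF, hi⟩ := ih (O ∩ (C a)ᶜ) (hO.inter (hC a).isOpen_compl) h hsub'
      exact ⟨i, Finset.mem_insert_of_mem hiF, hi⟩
    · have hOC : O ⊆ C a := by
        intro x hx
        by_contra hxc
        exact h ⟨x, hx, hxc⟩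
      exact ⟨a, Finset.mem_insert_self a F,
        hne.mono (hO.subset_interior_iff.mpr hOC)⟩

/-- Let `p : Y → X` be a continuous `G`-equivariant surjection of compact
Hausdorff `G`-spaces, with `Y` totally disconnected and irreducible over `X` (every closed
`G`-invariant subset of `Y` mapping onto `X` is all of `Y`).  If the action on `X` is minimal
or `G` is countable, then the preimage of every dense subset of `X` is dense in `Y`. -/
theorem dense_preimage_of_irreducible
    {G X Y : Type*} [Group G]
    [TopologicalSpace X] [CompactSpace X] [T2Space X] [MulAction G X] [ContinuousConstSMul G X]
    [TopologicalSpace Y] [CompactSpace Y] [T2Space Y] [TotallyDisconnectedSpace Y]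
    [MulAction G Y] [ContinuousConstSMul G Y]
    (p : Y → X) (hpc : Continuous p) (hps : Function.Surjective p)
    (hpe : ∀ (g : G) (y : Y), p (g • y) = g • p y)
    (hirr : ∀ A : Set Y, IsClosed A → (∀ (g : G), ∀ y ∈ A, g • y ∈ A) →
      p '' A = Set.univ → A = Set.univ)
    (hmc : IsMinimalAction G X ∨ Countable G)
    (D : Set X) (hD : Dense D) :
    Dense (p ⁻¹' D) := by
  rw [dense_iff_inter_open]
  intro U hU ⟨y₀, hy₀⟩
  -- find a nonempty clopen V ⊆ U
  obtain ⟨V, hVclopen, hy₀V, hVU⟩ := compact_exists_isClopen_in_isOpen hU hy₀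
  -- the orbit of V
  set W : Set Y := ⋃ g : G, g • V with hW
  have hWopen : IsOpen W := isOpen_iUnion fun g => hVclopen.isOpen.smul g
  have hWinv : ∀ (g : G), ∀ y ∈ Wᶜ, g • y ∈ Wᶜ := by
    intro g y hy hgy
    refine hy ?_
    simp only [hW, Set.mem_iUnion] at hgy ⊢
    obtain ⟨h, hh⟩ := hgy
    refine ⟨g⁻¹ * h, ?_⟩
    rw [mul_smul]
    simpa [Set.mem_smul_set_iff_inv_smul_mem, mul_smul] using hh
  -- irreducibility: the complement of W does not map onto X
  have hWcne : Wᶜ ≠ Set.univ := by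
    intro h
    have : y₀ ∈ Wᶜ := h ▸ Set.mem_univ y₀
    exact this (Set.mem_iUnion.2 ⟨1, by simpa using hy₀V⟩)
  have : p '' Wᶜ ≠ Set.univ := fun h =>
    hWcne (hirr _ hWopen.isClosed_compl hWinv h)
  obtain ⟨x, hx⟩ : ∃ x : X, x ∉ p '' Wᶜ := by
    by_contra h
    push_neg at h
    exact this (Set.eq_univ_of_forall h)
  have hfibW : p ⁻¹' {x} ⊆ W := by
    intro y hy
    by_contra hyW
    exact hx ⟨y, hyW, hy⟩
  -- finite subcover of the fiber
  have hfibcpt : IsCompact (p ⁻¹' {x}) := (isClosed_singleton.preimage hpc).isCompact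
  obtain ⟨F, hF⟩ := hfibcpt.elim_finite_subcover (fun g : G => g • V)
    (fun g => hVclopen.isOpen.smul g) hfibW
  set W' : Set Y := ⋃ g ∈ F, g • V with hW'
  have hW'open : IsOpen W' := isOpen_biUnion fun g _ => hVclopen.isOpen.smul g
  -- p is a closed map; get open O ∋ x with p⁻¹ O ⊆ W'
  set O : Set X := (p '' W'ᶜ)ᶜ with hO
  have hOopen : IsOpen O :=
    (hW'open.isClosed_compl.isCompact.image hpc).isClosed.isOpen_compl
  have hxO : x ∈ O := by
    intro ⟨y, hyW', hpy⟩
    exact hyW' (hF hpy)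
  have hpre : ∀ y : Y, p y ∈ O → y ∈ W' := by
    intro y hy
    by_contra h
    exact hy ⟨y, h, rfl⟩
  -- O is covered by the finitely many closed sets g • (p '' V)
  have hOsub : O ⊆ ⋃ g ∈ F, g • (p '' V) := by
    intro o ho
    obtain ⟨y, rfl⟩ := hps o
    have := hpre y ho
    simp only [hW', Set.mem_iUnion] at this
    obtain ⟨g, hgF, hgy⟩ := this
    obtain ⟨v, hv, rfl⟩ := hgy
    simp only [Set.mem_iUnion]
    exact ⟨g, hgF, ⟨p v, ⟨v, hv, rfl⟩, (hpe g v).symm⟩⟩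
  have hpVcpt : IsCompact (p '' V) := (hVclopen.isClosed.isCompact).image hpc
  have hclosed : ∀ g : G, IsClosed (g • (p '' V)) := by
    intro g
    have : IsCompact (g • (p '' V)) := hpVcpt.smul g
    exact this.isClosed
  obtain ⟨g, _, hgint⟩ := aux_finset_closed_cover F (fun g => g • (p '' V)) hclosed O
    hOopen ⟨x, hxO⟩ hOsub
  -- translate: interior (p '' V) is nonempty
  have hint : (interior (p '' V)).Nonempty := by
    rw [interior_smul] at hgint
    obtain ⟨z, hz⟩ := hgint
    obtain ⟨w, hw, rfl⟩ := hz
    exact ⟨w, hw⟩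
  -- density of D gives a point of D in interior (p '' V)
  obtain ⟨d, hdint, hdD⟩ := hD.inter_open_nonempty _ isOpen_interior hint
  obtain ⟨y, hyV, hpy⟩ := interior_subset hdint
  exact ⟨y, hVU hyV, by simp [Set.mem_preimage, hpy, hdD]⟩
end
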